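/- arXiv:2409.09158 — 2 statements merged into one kernel-verified Lean document; each statement's English description precedes it below -/
import Mathlib

section
/- Assume the coverage constraint (E2) and the flow-conservation constraint (E3) hold, the precedence-time constraint holds, and s(i) > 0 for every call i. If x(i,k) = 1 for some call i and ambulance k (i.e., i is the first call served by ambulance k), then there exist n ≥ 0 and pairwise distinct calls j₀ = i, j₁, …, jₙ such that w(j_l, j_{l+1}, k) = 1 for every l < n and z(jₙ, k) = 1; that is, ambulance k serves a finite chain of calls starting at its first call i and ending at a call jₙ which is the last call served by k. -/
/-!
Time strictly increases along the route of ambulance `k`, since `t d ≥ t c + s c > t c` whenever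
`w c d k = 1`; so on finitely many calls every route is finite and visits no call twice. By flow
conservation (E3), a call that ambulance `k` enters and does not finish at (`z c k = 0`) must be
left towards another call, which `k` then enters. Following these successors from the first call
`i` must therefore stop, and it can only stop at a call `jₙ` with `z jₙ k = 1`.
-/

open Finset

theorem exists_eq_one_of_one_le_sum {ι : Type*} {s : Finset ι} {f : ι → ℕ}
    (hf : ∀ i ∈ s, f i = 0 ∨ f i = 1) (h : 1 ≤ ∑ i ∈ s, f i) : ∃ i ∈ s, f i = 1 := by
  obtain ⟨i, hi, hne⟩ := exists_ne_zero_of_sum_ne_zero (by omega : ∑ i ∈ s, f i ≠ 0)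
  exact ⟨i, hi, (hf i hi).resolve_left hne⟩

section Chain

variable {α β : Type*} [Preorder β] {r : α → α → Prop} {f : α → β}

theorem exists_chain_to_of_lt [Finite α] (hf : ∀ a b, r a b → f a < f b) {S P : α → Prop}
    (hstep : ∀ a, S a → P a ∨ ∃ b, r a b ∧ S b) {a : α} (ha : S a) :
    ∃ (n : ℕ) (j : ℕ → α), j 0 = a ∧ (∀ l < n, r (j l) (j (l + 1))) ∧ P (j n) := by
  have hwf : WellFounded (InvImage (· > ·) f) := Finite.wellFounded_of_trans_of_irrefl _
  induction a using hwf.induction with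
  | _ a ih =>
    rcases hstep a ha with hPa | ⟨b, hab, hb⟩
    · exact ⟨0, fun _ => a, rfl, nofun, hPa⟩
    obtain ⟨n, j, hj0, hchain, hPn⟩ := ih b (hf a b hab) hb
    refine ⟨n + 1, fun | 0 => a | m + 1 => j m, rfl, ?_, hPn⟩
    rintro (_ | l) hl
    · show r a (j 0)
      rwa [hj0]
    · exact hchain l (by omega)

theorem injOn_Iic_of_lt_succ {j : ℕ → α} {n : ℕ} (h : ∀ l < n, f (j l) < f (j (l + 1))) :
    Set.InjOn j (Set.Iic n) :=
  (strictMonoOn_Iic_of_lt_succ (ψ := f ∘ j) h).injOn.of_comp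

end Chain

section Flow

variable {C A : Type*} [Fintype C] [DecidableEq C]

def inflow (x : C → A → ℕ) (w : C → C → A → ℕ) (k : A) (c : C) : ℕ :=
  x c k + ∑ j ∈ univ.filter (fun j => j ≠ c), w j c k

theorem last_or_exists_next {x z : C → A → ℕ} {w : C → C → A → ℕ} {k : A}
    (hz : ∀ c, z c k = 0 ∨ z c k = 1) (hw : ∀ c d, w c d k = 0 ∨ w c d k = 1)
    (hE3 : ∀ c, inflow x w k c = z c k + ∑ j ∈ univ.filter (fun j => j ≠ c), w c j k)
    (c : C) (hc : 1 ≤ inflow x w k c) :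
    z c k = 1 ∨ ∃ d, w c d k = 1 ∧ 1 ≤ inflow x w k d := by
  rcases hz c with hzc | hzc
  · have hout : 1 ≤ ∑ j ∈ univ.filter (fun j => j ≠ c), w c j k := by have := hE3 c; omega
    obtain ⟨d, hd, hcd⟩ := exists_eq_one_of_one_le_sum (fun d _ => hw c d) hout
    have hdc : c ∈ univ.filter (fun j => j ≠ d) := by simpa [eq_comm] using hd
    refine .inr ⟨d, hcd, ?_⟩
    calc 1 = w c d k := hcd.symm
      _ ≤ ∑ j ∈ univ.filter (fun j => j ≠ d), w j d k :=
        single_le_sum (f := fun j => w j d k) (fun _ _ => Nat.zero_le _) hdc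
      _ ≤ inflow x w k d := Nat.le_add_left _ _
  · exact .inl hzc

end Flow

theorem first_call_chain_to_last_general
    {C A : Type*} [Fintype C] [DecidableEq C]
    (t s : C → ℝ) (x z : C → A → ℕ) (w : C → C → A → ℕ)
    (hz : ∀ i k, z i k = 0 ∨ z i k = 1)
    (hw : ∀ i j k, w i j k = 0 ∨ w i j k = 1)
    (hE3 : ∀ i k, x i k + ∑ j ∈ univ.filter (fun j => j ≠ i), w j i k
        = z i k + ∑ j ∈ univ.filter (fun j => j ≠ i), w i j k)
    (hprec : ∀ i j k, w i j k = 1 → t i + s i ≤ t j)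
    (hs : ∀ i, 0 < s i)
    (i : C) (k : A) (hxi : x i k = 1) :
    ∃ (n : ℕ) (j : ℕ → C), j 0 = i ∧
      (∀ l₁ l₂, l₁ ≤ n → l₂ ≤ n → l₁ ≠ l₂ → j l₁ ≠ j l₂) ∧
      (∀ l < n, w (j l) (j (l + 1)) k = 1) ∧
      z (j n) k = 1 := by
  have hlt : ∀ c d, w c d k = 1 → t c < t d := fun c d hcd => by
    linarith [hprec c d k hcd, hs c]
  have hstep := last_or_exists_next (hz · k) (hw · · k) (hE3 · k)
  obtain ⟨n, j, hj0, hchain, hlast⟩ :=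
    exists_chain_to_of_lt hlt hstep
      (show 1 ≤ inflow x w k i from hxi ▸ Nat.le_add_right _ _)
  have hinj := injOn_Iic_of_lt_succ (fun l hl => hlt _ _ (hchain l hl))
  exact ⟨n, j, hj0, fun l₁ l₂ h₁ h₂ hne heq => hne (hinj h₁ h₂ heq), hchain, hlast⟩

/-- Under the coverage constraint (E2), the flow-conservation
constraint (E3), the precedence-time constraint and positive service times,
if x(i,k) = 1 then ambulance k serves a finite chain of pairwise distinct calls
starting at its first call i and ending at a call jₙ with z(jₙ,k) = 1. -/
theorem first_call_chain_to_last
    {C A : Type*} [Fintype C] [Fintype A] [DecidableEq C]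
    (t s : C → ℝ) (x z : C → A → ℕ) (w : C → C → A → ℕ)
    (hx : ∀ i k, x i k = 0 ∨ x i k = 1)
    (hz : ∀ i k, z i k = 0 ∨ z i k = 1)
    (hw : ∀ i j k, w i j k = 0 ∨ w i j k = 1)
    (hE2 : ∀ i, (∑ k, x i k) +
        ∑ k, ∑ j ∈ univ.filter (fun j => j ≠ i), w j i k = 1)
    (hE3 : ∀ i k, x i k + ∑ j ∈ univ.filter (fun j => j ≠ i), w j i k
        = z i k + ∑ j ∈ univ.filter (fun j => j ≠ i), w i j k)
    (hprec : ∀ i j k, w i j k = 1 → t i + s i ≤ t j)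
    (hs : ∀ i, 0 < s i)
    (i : C) (k : A) (hxi : x i k = 1) :
    ∃ (n : ℕ) (j : ℕ → C), j 0 = i ∧
      (∀ l₁ l₂, l₁ ≤ n → l₂ ≤ n → l₁ ≠ l₂ → j l₁ ≠ j l₂) ∧
      (∀ l < n, w (j l) (j (l + 1)) k = 1) ∧
      z (j n) k = 1 :=
  first_call_chain_to_last_general t s x z w hz hw hE3 hprec hs i k hxi
end

section
/- Assume the coverage constraint (E2) and the flow-conservation constraint (E3) hold, the precedence-time constraint holds, and s(i) > 0 for every call i. If an ambulance k has no first served call, i.e., x(i,k) = 0 for every call i, then ambulance k serves no call at all: w(i,j,k) = 0 for all pairs of distinct calls i, j, and z(i,k) = 0 for every call i. -/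
/-!
With no first call, flow conservation says that every call ambulance `k` leaves is also a call it
arrives at, from a predecessor that starts strictly earlier because service times are positive.
An earliest call among the finitely many that `k` leaves has no such predecessor.
-/

open Finset

theorem forall_not_rel_of_map_lt_of_exists_pred {C α : Type*} [Finite C] [LinearOrder α]
    (t : C → α) (r : C → C → Prop) (hlt : ∀ i j, r i j → t i < t j)
    (hpred : ∀ i j, r i j → ∃ h, r h i) (i j : C) : ¬ r i j := by
  intro hij
  have : Nonempty {i // ∃ j, r i j} := ⟨⟨i, j, hij⟩⟩
  obtain ⟨⟨m, m', hmm'⟩, hmin⟩ := Finite.exists_min (t ∘ Subtype.val : {i // ∃ j, r i j} → α)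
  obtain ⟨h, hhm⟩ := hpred m m' hmm'
  exact (hlt h m hhm).not_ge (hmin ⟨h, m, hhm⟩)

theorem exists_ne_zero_of_sum_eq_add_sum {ι : Type*} {s s' : Finset ι} {f g : ι → ℕ} {z : ℕ}
    (h : ∑ i ∈ s, f i = z + ∑ i ∈ s', g i) {j : ι} (hj : j ∈ s') (hgj : g j ≠ 0) :
    ∃ i ∈ s, f i ≠ 0 := by
  apply exists_ne_zero_of_sum_ne_zero
  have := single_le_sum (fun i _ => Nat.zero_le (g i)) hj
  omega

theorem no_first_call_serves_nothing_general
    {C A : Type*} [Fintype C] [DecidableEq C]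
    (t s : C → ℝ) (x z : C → A → ℕ) (w : C → C → A → ℕ)
    (hw : ∀ i j k, w i j k = 0 ∨ w i j k = 1)
    (hE3 : ∀ i k, x i k + ∑ j ∈ univ.filter (fun j => j ≠ i), w j i k
        = z i k + ∑ j ∈ univ.filter (fun j => j ≠ i), w i j k)
    (hprec : ∀ i j k, w i j k = 1 → t i + s i ≤ t j)
    (hs : ∀ i, 0 < s i)
    (k : A) (hxk : ∀ i, x i k = 0) :
    (∀ i j, i ≠ j → w i j k = 0) ∧ (∀ i, z i k = 0) := by
  have hlt : ∀ i j, i ≠ j ∧ w i j k ≠ 0 → t i < t j := fun i j ⟨_, hwij⟩ => by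
    linarith [hprec i j k ((hw i j k).resolve_left hwij), hs i]
  have hpred : ∀ i j, i ≠ j ∧ w i j k ≠ 0 → ∃ h, h ≠ i ∧ w h i k ≠ 0 := by
    rintro i j ⟨hij, hwij⟩
    have hflow := hE3 i k
    rw [hxk i, zero_add] at hflow
    obtain ⟨h, hh, hwhi⟩ := exists_ne_zero_of_sum_eq_add_sum hflow (by simpa using hij.symm) hwij
    exact ⟨h, (mem_filter.1 hh).2, hwhi⟩
  have hno_edge : ∀ i j, i ≠ j → w i j k = 0 := fun i j hij => by
    by_contra hwij
    exact forall_not_rel_of_map_lt_of_exists_pred t _ hlt hpred i j ⟨hij, hwij⟩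
  refine ⟨hno_edge, fun i => ?_⟩
  have hin : ∑ j ∈ univ.filter (fun j => j ≠ i), w j i k = 0 :=
    sum_eq_zero fun j hj => hno_edge j i (mem_filter.1 hj).2
  have hflow := hE3 i k
  rw [hxk i, hin] at hflow
  omega

/-- Under (E2), (E3), the precedence-time constraint and positive
service times, if an ambulance k has no first served call (x(i,k) = 0 for every
call i), then k serves no call at all: w(i,j,k) = 0 for all distinct calls i, j
and z(i,k) = 0 for every call i. -/
theorem no_first_call_serves_nothing
    {C A : Type*} [Fintype C] [Fintype A] [DecidableEq C]
    (t s : C → ℝ) (x z : C → A → ℕ) (w : C → C → A → ℕ)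
    (hx : ∀ i k, x i k = 0 ∨ x i k = 1)
    (hz : ∀ i k, z i k = 0 ∨ z i k = 1)
    (hw : ∀ i j k, w i j k = 0 ∨ w i j k = 1)
    (hE2 : ∀ i, (∑ k, x i k) +
        ∑ k, ∑ j ∈ univ.filter (fun j => j ≠ i), w j i k = 1)
    (hE3 : ∀ i k, x i k + ∑ j ∈ univ.filter (fun j => j ≠ i), w j i k
        = z i k + ∑ j ∈ univ.filter (fun j => j ≠ i), w i j k)
    (hprec : ∀ i j k, w i j k = 1 → t i + s i ≤ t j)
    (hs : ∀ i, 0 < s i)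
    (k : A) (hxk : ∀ i, x i k = 0) :
    (∀ i j, i ≠ j → w i j k = 0) ∧ (∀ i, z i k = 0) :=
  no_first_call_serves_nothing_general t s x z w hw hE3 hprec hs k hxk
end
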